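/- arXiv:1508.07036 — 3 statements merged into one kernel-verified Lean document; each statement's English description precedes it below -/
import Mathlib

section
/- The dependence adjusted norm of the product process satisfies ‖(X_{·j}X_{·k})‖_{q/2,α} ≤ 2‖X_{·j}‖_{q,0}‖X_{·k}‖_{q,α} + 2‖X_{·k}‖_{q,0}‖X_{·j}‖_{q,α}. -/
open scoped ENNReal BigOperators

/-- Dependence adjusted norm `‖·‖_{q,α}` built from a functional dependence measure
`δ : ℕ → ℝ≥0∞`: `sup_{m ≥ 0} (m+1)^α ∑_{i ≥ m} δ_i`. -/
noncomputable def depAdjNorm (α : ℝ) (δ : ℕ → ℝ≥0∞) : ℝ≥0∞ :=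
  ⨆ m : ℕ, ((m : ℝ≥0∞) + 1) ^ α * ∑' i : ℕ, δ (m + i)

lemma le_depAdjNorm (α : ℝ) (δ : ℕ → ℝ≥0∞) (m : ℕ) :
    ((m : ℝ≥0∞) + 1) ^ α * ∑' i, δ (m + i) ≤ depAdjNorm α δ :=
  le_iSup (fun n : ℕ => ((n : ℝ≥0∞) + 1) ^ α * ∑' i, δ (n + i)) m

lemma depAdjNorm_le_of_le_add {α : ℝ} {φ δ ε : ℕ → ℝ≥0∞} {a b : ℝ≥0∞}
    (h : ∀ i, φ i ≤ a * δ i + b * ε i) :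
    depAdjNorm α φ ≤ a * depAdjNorm α δ + b * depAdjNorm α ε := by
  refine iSup_le fun m => ?_
  set w : ℝ≥0∞ := ((m : ℝ≥0∞) + 1) ^ α
  have tail_le : ∑' i, φ (m + i) ≤ a * ∑' i, δ (m + i) + b * ∑' i, ε (m + i) := by
    calc ∑' i, φ (m + i) ≤ ∑' i, (a * δ (m + i) + b * ε (m + i)) :=
          ENNReal.tsum_le_tsum fun i => h (m + i)
      _ = a * ∑' i, δ (m + i) + b * ∑' i, ε (m + i) := by
          rw [ENNReal.tsum_add, ENNReal.tsum_mul_left, ENNReal.tsum_mul_left]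
  calc w * ∑' i, φ (m + i)
      ≤ w * (a * ∑' i, δ (m + i) + b * ∑' i, ε (m + i)) := by gcongr
    _ = a * (w * ∑' i, δ (m + i)) + b * (w * ∑' i, ε (m + i)) := by ring
    _ ≤ a * depAdjNorm α δ + b * depAdjNorm α ε := by
        gcongr <;> exact le_depAdjNorm α _ m

theorem stmt_5_general (α : ℝ) (δj δk φ : ℕ → ℝ≥0∞) (Aj Ak : ℝ≥0∞)
    (hAj : Aj ≤ depAdjNorm 0 δj) (hAk : Ak ≤ depAdjNorm 0 δk)
    (hφ : ∀ i, φ i ≤ 2 * Aj * δk i + 2 * Ak * δj i) :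
    depAdjNorm α φ ≤
      2 * depAdjNorm 0 δj * depAdjNorm α δk + 2 * depAdjNorm 0 δk * depAdjNorm α δj := by
  calc depAdjNorm α φ ≤ 2 * Aj * depAdjNorm α δk + 2 * Ak * depAdjNorm α δj :=
        depAdjNorm_le_of_le_add hφ
    _ ≤ _ := by gcongr

/-- Dependence adjusted norm of the product process: if the functional dependence measure
`φ` of `𝒳_{i,(j,k)} = X_{ij}X_{ik} − E(X_{ij}X_{ik})` satisfies
`φ_i ≤ 2 ‖X_{ij}‖_q δ_{i,q,k} + 2 ‖X_{ik}‖_q δ_{i,q,j}` with `‖X_{ij}‖_q ≤ ‖X_{·j}‖_{q,0}`,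
then `‖𝒳_{·,(j,k)}‖_{q/2,α} ≤ 2 ‖X_{·j}‖_{q,0} ‖X_{·k}‖_{q,α} + 2 ‖X_{·k}‖_{q,0} ‖X_{·j}‖_{q,α}`. -/
theorem stmt_5 (α : ℝ) (hα : 0 ≤ α) (δj δk φ : ℕ → ℝ≥0∞) (Aj Ak : ℝ≥0∞)
    (hAj : Aj ≤ depAdjNorm 0 δj) (hAk : Ak ≤ depAdjNorm 0 δk)
    (hφ : ∀ i, φ i ≤ 2 * Aj * δk i + 2 * Ak * δj i) :
    depAdjNorm α φ ≤
      2 * depAdjNorm 0 δj * depAdjNorm α δk + 2 * depAdjNorm 0 δk * depAdjNorm α δj :=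
  stmt_5_general α δj δk φ Aj Ak hAj hAk hφ
end

section
/- Let X_{11}, …, X_{n1} be i.i.d. symmetric random variables with E(X^2) = 1 and tail P(X ≥ u) = u^{−q}(log u)^{−2} for u ≥ u_0, and suppose the Nagaev expansion P(X_{11}+…+X_{n1} ≥ y) ~ n y^{−q}(log y)^{−2} + 1 − Φ(y/√n) holds for y ≥ √n. If n^{q/2−1} = o(p (log n)^{−2} (log p)^{−q/2}), then with u = (2 log p)^{1/2}: p·P(|N(0,1)| ≥ u) → 0 while p·P(M_n ≥ √n u) → ∞, where M_n = X_{11}+…+X_{n1}, and hence |P^p(|M_n| ≤ √n u) − P^p(|N(0,1)| ≤ u)| → 1. -/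
open MeasureTheory ProbabilityTheory Filter
open scoped ENNReal BigOperators

/-- The standard normal CDF `Φ`. -/
noncomputable def stdNormalCDF (x : ℝ) : ℝ := ((gaussianReal 0 1) (Set.Iic x)).toReal

/-- Tail probability `P(∑_{i<n} X_i ≥ y)` of the partial sum. -/
noncomputable def sumTail {Ω : Type*} [MeasurableSpace Ω] (μ : Measure Ω)
    (X : ℕ → Ω → ℝ) (n : ℕ) (y : ℝ) : ℝ :=
  (μ {ω | y ≤ ∑ i ∈ Finset.range n, X i ω}).toReal

/-!
With `u = √(2 log p)`, Mills' ratio `1 - Φ(u) ≤ e^{-u²/2} / u = 1 / (p u)` gives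
`p (1 - Φ(u)) → 0` (the cruder bound `2 e^{-u²/2}` would only give `O(1)`), so
`(2Φ(u) - 1)^p → 1` by Bernoulli's inequality. On the other side, the Nagaev expansion at
`y = √n u` bounds `P(M_n ≥ y)` below by half its heavy-tail term `n y^{-q} (log y)^{-2}`, and
`p` times this term tends to infinity: by the rate assumption when `u² ≤ n`, since then
`log y ≤ log n`, and otherwise because `p = e^{u²/2}` beats every power of `u`. As the upper
half of the expansion also gives `P(M_n ≥ y) → 0`, eventually
`0 ≤ (1 - 2 P(M_n ≥ y))^p ≤ exp (-2p P(M_n ≥ y)) → 0`.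
-/

open Real Set Topology

lemma one_sub_stdNormalCDF_eq (x : ℝ) :
    1 - stdNormalCDF x = (gaussianReal 0 1).real (Ioi x) := by
  rw [stdNormalCDF, ← Measure.real_def, ← compl_Iic, measureReal_compl measurableSet_Iic,
    probReal_univ]

lemma one_sub_stdNormalCDF_nonneg (x : ℝ) : 0 ≤ 1 - stdNormalCDF x := by
  rw [one_sub_stdNormalCDF_eq]; exact measureReal_nonneg

lemma one_sub_stdNormalCDF_le_one (x : ℝ) : 1 - stdNormalCDF x ≤ 1 := by
  rw [one_sub_stdNormalCDF_eq]; exact measureReal_le_one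

lemma tendsto_one_sub_stdNormalCDF_atTop :
    Tendsto (fun x ↦ 1 - stdNormalCDF x) atTop (𝓝 0) := by
  have hcdf : stdNormalCDF = cdf (gaussianReal 0 1) := funext fun x ↦ (cdf_eq_real _ x).symm
  simpa [hcdf] using
    (tendsto_const_nhds (x := (1 : ℝ))).sub (tendsto_cdf_atTop (gaussianReal 0 1))

lemma integrable_mul_exp_neg_sq_div_two : Integrable fun x : ℝ ↦ x * exp (-x ^ 2 / 2) := by
  simpa [neg_div, div_eq_inv_mul] using integrable_mul_exp_neg_mul_sq (b := 1 / 2) (by norm_num)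

lemma integral_Ioi_mul_exp_neg_sq_div_two (u : ℝ) :
    ∫ x in Ioi u, x * exp (-x ^ 2 / 2) = exp (-u ^ 2 / 2) := by
  have hderiv (x : ℝ) : HasDerivAt (fun x ↦ -exp (-x ^ 2 / 2)) (x * exp (-x ^ 2 / 2)) x := by
    refine (((hasDerivAt_pow 2 x).neg.div_const 2).exp.neg).congr_deriv ?_
    simp only [Pi.neg_apply, Nat.cast_ofNat]
    ring
  have hlim : Tendsto (fun x : ℝ ↦ -exp (-x ^ 2 / 2)) atTop (𝓝 0) := by
    simpa using (tendsto_exp_atBot.comp <|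
      (tendsto_neg_atTop_atBot.comp (tendsto_pow_atTop two_ne_zero)).atBot_div_const
        two_pos).neg
  rw [integral_Ioi_of_hasDerivAt_of_tendsto' (fun x _ ↦ hderiv x)
    integrable_mul_exp_neg_sq_div_two.integrableOn hlim]
  ring

lemma one_sub_stdNormalCDF_le_exp_div {u : ℝ} (hu : 0 < u) :
    1 - stdNormalCDF u ≤ exp (-u ^ 2 / 2) / u := by
  have hpdf_le : ∀ x ∈ Ioi u, gaussianPDFReal 0 1 x ≤ u⁻¹ * (x * exp (-x ^ 2 / 2)) := by
    intro x (hx : u < x)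
    have hsqrt : 1 ≤ √(2 * π) := one_le_sqrt.mpr (by linarith [pi_gt_three])
    have hxu : 1 ≤ u⁻¹ * x := by rw [← div_eq_inv_mul, one_le_div hu]; exact hx.le
    calc gaussianPDFReal 0 1 x = (√(2 * π))⁻¹ * exp (-x ^ 2 / 2) := by simp [gaussianPDFReal]
      _ ≤ u⁻¹ * x * exp (-x ^ 2 / 2) := by
        gcongr
        exact (inv_le_one_of_one_le₀ hsqrt).trans hxu
      _ = u⁻¹ * (x * exp (-x ^ 2 / 2)) := mul_assoc _ _ _
  rw [one_sub_stdNormalCDF_eq, Measure.real, gaussianReal_apply_eq_integral 0 one_ne_zero,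
    ENNReal.toReal_ofReal (setIntegral_nonneg measurableSet_Ioi
      fun x _ ↦ gaussianPDFReal_nonneg 0 1 x)]
  calc ∫ x in Ioi u, gaussianPDFReal 0 1 x
      ≤ ∫ x in Ioi u, u⁻¹ * (x * exp (-x ^ 2 / 2)) :=
        setIntegral_mono_on (integrable_gaussianPDFReal 0 1).integrableOn
          (integrable_mul_exp_neg_sq_div_two.integrableOn.const_mul _) measurableSet_Ioi hpdf_le
    _ = exp (-u ^ 2 / 2) / u := by
        rw [integral_const_mul, integral_Ioi_mul_exp_neg_sq_div_two, inv_mul_eq_div]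

lemma mul_one_sub_stdNormalCDF_sqrt_two_mul_log_le {x : ℝ} (hx : 1 < x) :
    x * (1 - stdNormalCDF √(2 * log x)) ≤ (√(2 * log x))⁻¹ := by
  have hu : 0 < √(2 * log x) := sqrt_pos.mpr (by linarith [log_pos hx])
  have hexp : exp (-√(2 * log x) ^ 2 / 2) = x⁻¹ := by
    rw [sq_sqrt (by linarith [log_pos hx]), show -(2 * log x) / 2 = -log x by ring, exp_neg,
      exp_log (by linarith)]
  calc x * (1 - stdNormalCDF √(2 * log x)) ≤ x * (x⁻¹ / √(2 * log x)) := by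
        rw [← hexp]; gcongr; exact one_sub_stdNormalCDF_le_exp_div hu
    _ = (√(2 * log x))⁻¹ := by field_simp

lemma tendsto_mul_one_sub_stdNormalCDF_sqrt_two_mul_log {α : Type*} {l : Filter α}
    {f : α → ℝ} (hf : Tendsto f l atTop) :
    Tendsto (fun a ↦ f a * (1 - stdNormalCDF √(2 * log (f a)))) l (𝓝 0) := by
  have hroot : Tendsto (fun a ↦ √(2 * log (f a))) l atTop :=
    tendsto_sqrt_atTop.comp ((tendsto_log_atTop.comp hf).const_mul_atTop two_pos)
  refine tendsto_of_tendsto_of_tendsto_of_le_of_le' tendsto_const_nhds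
    hroot.inv_tendsto_atTop ?_ ?_
  · filter_upwards [hf.eventually_ge_atTop 0] with a ha
    exact mul_nonneg ha (one_sub_stdNormalCDF_nonneg _)
  · filter_upwards [hf.eventually_gt_atTop 1] with a ha
    exact mul_one_sub_stdNormalCDF_sqrt_two_mul_log_le ha

lemma tendsto_one_sub_pow_of_tendsto_mul_atTop {α : Type*} {l : Filter α} {a : α → ℝ}
    {k : α → ℕ} (ha : Tendsto a l (𝓝 0)) (hka : Tendsto (fun x ↦ k x * a x) l atTop) :
    Tendsto (fun x ↦ (1 - a x) ^ k x) l (𝓝 0) := by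
  have hexp : Tendsto (fun x ↦ exp (-(k x * a x))) l (𝓝 0) :=
    tendsto_exp_atBot.comp (tendsto_neg_atTop_atBot.comp hka)
  refine tendsto_of_tendsto_of_tendsto_of_le_of_le' tendsto_const_nhds hexp ?_ ?_
  all_goals filter_upwards [ha.eventually (eventually_le_nhds one_pos)] with x hx
  · exact pow_nonneg (by linarith) _
  · calc (1 - a x) ^ k x ≤ exp (-a x) ^ k x :=
          pow_le_pow_left₀ (by linarith) (by linarith [add_one_le_exp (-a x)]) _
      _ = exp (-(k x * a x)) := by rw [← exp_nat_mul]; ring_nf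

lemma tendsto_one_sub_pow_of_tendsto_mul_zero {α : Type*} {l : Filter α} {a : α → ℝ}
    {k : α → ℕ} (ha : ∀ x, a x ∈ Icc 0 2)
    (hka : Tendsto (fun x ↦ k x * a x) l (𝓝 0)) :
    Tendsto (fun x ↦ (1 - a x) ^ k x) l (𝓝 1) := by
  have hlower : Tendsto (fun x ↦ 1 - k x * a x) l (𝓝 1) := by
    simpa using tendsto_const_nhds.sub hka
  refine tendsto_of_tendsto_of_tendsto_of_le_of_le hlower tendsto_const_nhds (fun x ↦ ?_)
    (fun x ↦ ?_)
  · simpa [sub_eq_add_neg] using one_add_mul_le_pow (a := -a x) (by linarith [(ha x).2]) (k x)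
  · calc (1 - a x) ^ k x ≤ |1 - a x| ^ k x := by rw [← abs_pow]; exact le_abs_self _
      _ ≤ 1 := pow_le_one₀ (abs_nonneg _)
          (abs_le.mpr ⟨by linarith [(ha x).2], by linarith [(ha x).1]⟩)

noncomputable def heavyTailTerm (q n y : ℝ) : ℝ := n * y ^ (-q) * log y ^ (-(2 : ℝ))

lemma heavyTailTerm_pos {q n y : ℝ} (hn : 0 < n) (hy : 1 < y) : 0 < heavyTailTerm q n y :=
  mul_pos (mul_pos hn (rpow_pos_of_pos (by linarith) _)) (rpow_pos_of_pos (log_pos hy) _)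

lemma heavyTailTerm_sqrt_mul_sqrt {q n L : ℝ} (hn : 0 < n) (hL : 0 ≤ L) :
    heavyTailTerm q n (√n * √L) =
      n ^ (1 - q / 2) * L ^ (-(q / 2)) * log (√n * √L) ^ (-(2 : ℝ)) := by
  have hsqrt {x : ℝ} (hx : 0 ≤ x) : √x ^ (-q) = x ^ (-(q / 2)) := by
    rw [sqrt_eq_rpow, ← rpow_mul hx]; ring_nf
  rw [heavyTailTerm, mul_rpow (sqrt_nonneg _) (sqrt_nonneg _), hsqrt hn.le, hsqrt hL,
    sub_eq_add_neg, rpow_add hn, rpow_one]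
  ring

lemma log_sqrt_mul_sqrt {n L : ℝ} (hn : 0 < n) (hL : 0 < L) :
    log (√n * √L) = (log n + log L) / 2 := by
  rw [log_mul (sqrt_pos.2 hn).ne' (sqrt_pos.2 hL).ne', log_sqrt hn.le, log_sqrt hL.le]
  ring

lemma heavyTailTerm_sqrt_mul_sqrt_le {q n L : ℝ} (hq : 0 ≤ q) (hn : 9 ≤ n) (hL : 1 ≤ L) :
    heavyTailTerm q n (√n * √L) ≤ n ^ (1 - q / 2) := by
  have hy : 3 ≤ √n * √L := by
    have : 3 ≤ √n := le_sqrt_of_sq_le (by linarith)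
    nlinarith [one_le_sqrt.2 hL]
  have hlog : 1 ≤ log (√n * √L) := by
    rw [le_log_iff_exp_le (by linarith)]; linarith [exp_one_lt_three]
  rw [heavyTailTerm_sqrt_mul_sqrt (by linarith) (by linarith)]
  calc n ^ (1 - q / 2) * L ^ (-(q / 2)) * log (√n * √L) ^ (-(2 : ℝ))
      ≤ n ^ (1 - q / 2) * 1 * 1 := by
        gcongr
        · exact rpow_le_one_of_one_le_of_nonpos hL (by linarith)
        · exact rpow_le_one_of_one_le_of_nonpos hlog (by norm_num)
    _ = n ^ (1 - q / 2) := by ring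

lemma min_le_heavyTailTerm_sqrt_mul_sqrt {q n L : ℝ} (hq : 2 ≤ q) (hn : 1 < n) (hL : 1 < L) :
    min (n ^ (1 - q / 2) * L ^ (-(q / 2)) * log n ^ (-(2 : ℝ))) (L ^ (-1 - q)) ≤
      heavyTailTerm q n (√n * √L) := by
  have hn0 : 0 < n := by linarith
  have hL0 : 0 < L := by linarith
  have hlogy : 0 < (log n + log L) / 2 := by linarith [log_pos hn, log_pos hL]
  rw [heavyTailTerm_sqrt_mul_sqrt hn0 hL0.le, log_sqrt_mul_sqrt hn0 hL0]
  rcases le_or_gt L n with hLn | hnL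
  · refine (min_le_left _ _).trans ?_
    have : (log n + log L) / 2 ≤ log n := by linarith [log_le_log hL0 hLn]
    exact mul_le_mul_of_nonneg_left (rpow_le_rpow_of_nonpos hlogy this (by norm_num))
      (by positivity)
  · refine (min_le_right _ _).trans ?_
    have : (log n + log L) / 2 ≤ L := by linarith [log_le_log hn0 hnL.le, log_le_self hL0.le]
    calc L ^ (-1 - q) = L ^ (1 - q / 2) * L ^ (-(q / 2)) * L ^ (-(2 : ℝ)) := by
          rw [← rpow_add hL0, ← rpow_add hL0]; ring_nf
      _ ≤ n ^ (1 - q / 2) * L ^ (-(q / 2)) * ((log n + log L) / 2) ^ (-(2 : ℝ)) := by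
          refine mul_le_mul (mul_le_mul_of_nonneg_right ?_ (by positivity)) ?_ (by positivity)
            (by positivity)
          · exact rpow_le_rpow_of_nonpos hn0 hnL.le (by linarith)
          · exact rpow_le_rpow_of_nonpos hlogy this (by norm_num)

lemma tendsto_heavyTailTerm_sqrt_mul_sqrt_zero {q : ℝ} (hq : 2 < q) {L : ℕ → ℝ}
    (hL : ∀ᶠ n in atTop, 1 ≤ L n) :
    Tendsto (fun n : ℕ ↦ heavyTailTerm q n (√n * √(L n))) atTop (𝓝 0) := by
  have hpow : Tendsto (fun n : ℕ ↦ (n : ℝ) ^ (1 - q / 2)) atTop (𝓝 0) := by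
    simpa only [Function.comp_def, neg_sub] using
      (tendsto_rpow_neg_atTop (by linarith : 0 < q / 2 - 1)).comp tendsto_natCast_atTop_atTop
  refine tendsto_of_tendsto_of_tendsto_of_le_of_le' tendsto_const_nhds hpow ?_ ?_
  all_goals filter_upwards [hL, eventually_ge_atTop 9] with n hLn hn
  · refine (heavyTailTerm_pos (by positivity) ?_).le
    have : 3 ≤ √(n : ℝ) := le_sqrt_of_sq_le (by norm_num; exact_mod_cast hn)
    nlinarith [one_le_sqrt.2 hLn]
  · exact heavyTailTerm_sqrt_mul_sqrt_le (by linarith) (by exact_mod_cast hn) hLn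

lemma tendsto_mul_heavyTailTerm_sqrt_mul_sqrt_atTop {q : ℝ} (hq : 2 < q) {p : ℕ → ℕ}
    (hptop : Tendsto (fun n ↦ (p n : ℝ)) atTop atTop)
    (hrate : Tendsto
      (fun n : ℕ ↦ (n : ℝ) ^ (q / 2 - 1) * log n ^ 2 * log (p n) ^ (q / 2) / p n)
      atTop (𝓝 0)) :
    Tendsto (fun n : ℕ ↦ p n * heavyTailTerm q n (√n * √(2 * log (p n)))) atTop atTop := by
  have hlog : Tendsto (fun n ↦ log (p n)) atTop atTop := tendsto_log_atTop.comp hptop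
  have hL : Tendsto (fun n ↦ 2 * log (p n)) atTop atTop := hlog.const_mul_atTop two_pos
  have hrate_branch : Tendsto (fun n : ℕ ↦
      p n * ((n : ℝ) ^ (1 - q / 2) * (2 * log (p n)) ^ (-(q / 2)) * log n ^ (-(2 : ℝ))))
      atTop atTop := by
    have hrate_pos : ∀ᶠ n : ℕ in atTop,
        0 < (n : ℝ) ^ (q / 2 - 1) * log n ^ 2 * log (p n) ^ (q / 2) / p n := by
      filter_upwards [eventually_ge_atTop 2, hlog.eventually_gt_atTop 0,
        hptop.eventually_gt_atTop 0] with n hn hlogp hp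
      have : 0 < log n := log_pos (by exact_mod_cast hn)
      positivity
    have hinv := (tendsto_nhdsWithin_iff.2 ⟨hrate, hrate_pos⟩).inv_tendsto_nhdsGT_zero
    refine (hinv.const_mul_atTop (rpow_pos_of_pos two_pos (-(q / 2)))).congr' ?_
    filter_upwards [eventually_ge_atTop 1, hlog.eventually_gt_atTop 0,
      hptop.eventually_gt_atTop 0] with n hn hlogp hp
    have hlogn : 0 ≤ log n := log_nonneg (by exact_mod_cast hn)
    simp only [Pi.inv_apply]
    rw [mul_rpow zero_le_two hlogp.le, show 1 - q / 2 = -(q / 2 - 1) by ring,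
      rpow_neg (Nat.cast_nonneg n), rpow_neg zero_le_two, rpow_neg hlogp.le, rpow_neg hlogn,
      rpow_two]
    field_simp
  have hexp_branch : Tendsto (fun n ↦ p n * (2 * log (p n)) ^ (-1 - q)) atTop atTop := by
    refine ((tendsto_exp_mul_div_rpow_atTop (1 + q) (1 / 2) one_half_pos).comp hL).congr' ?_
    filter_upwards [hptop.eventually_gt_atTop 0, hL.eventually_gt_atTop 0] with n hp hLn
    rw [Function.comp_apply, show 1 / 2 * (2 * log (p n)) = log (p n) by ring, exp_log hp,
      show -1 - q = -(1 + q) by ring, rpow_neg hLn.le, div_eq_mul_inv]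
  refine tendsto_atTop_mono' _ ?_ (tendsto_inf_atTop _ hrate_branch hexp_branch)
  filter_upwards [eventually_ge_atTop 2, hL.eventually_gt_atTop 1,
    hptop.eventually_gt_atTop 0] with n hn hLn hp
  rw [← mul_min_of_nonneg _ _ hp.le]
  exact mul_le_mul_of_nonneg_left
    (min_le_heavyTailTerm_sqrt_mul_sqrt hq.le (by exact_mod_cast hn) hLn) hp.le

lemma mul_le_and_le_mul_of_abs_div_sub_one_le {s d ε : ℝ} (hd : 0 < d) (h : |s / d - 1| ≤ ε) :
    (1 - ε) * d ≤ s ∧ s ≤ (1 + ε) * d := by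
  obtain ⟨hlo, hhi⟩ := abs_le.mp h
  exact ⟨(le_div_iff₀ hd).1 (by linarith), (div_le_iff₀ hd).1 (by linarith)⟩

def NagaevApprox {Ω : Type*} [MeasurableSpace Ω] (μ : Measure Ω) (X : ℕ → Ω → ℝ)
    (q ε : ℝ) : Prop :=
  ∃ N : ℕ, ∀ n ≥ N, ∀ y : ℝ, √n ≤ y →
    |sumTail μ X n y / (heavyTailTerm q n y + (1 - stdNormalCDF (y / √n))) - 1| ≤ ε

section NagaevApprox

variable {Ω : Type*} [MeasurableSpace Ω] {μ : Measure Ω} {X : ℕ → Ω → ℝ} {q ε : ℝ}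

lemma eventually_sumTail_mem_Icc (hNagaev : NagaevApprox μ X q ε)
    {L : ℕ → ℝ} (hL : ∀ᶠ n in atTop, 1 ≤ L n) :
    ∀ᶠ n : ℕ in atTop, sumTail μ X n (√n * √(L n)) ∈
      Icc ((1 - ε) * (heavyTailTerm q n (√n * √(L n)) + (1 - stdNormalCDF √(L n))))
        ((1 + ε) * (heavyTailTerm q n (√n * √(L n)) + (1 - stdNormalCDF √(L n)))) := by
  obtain ⟨N, hN⟩ := hNagaev
  filter_upwards [eventually_ge_atTop (max N 2), hL] with n hn hLn
  have hn2 : (2 : ℝ) ≤ n := by exact_mod_cast le_of_max_le_right hn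
  have hy : √n ≤ √n * √(L n) := le_mul_of_one_le_right (sqrt_nonneg _) (one_le_sqrt.2 hLn)
  have hratio := hN n (le_of_max_le_left hn) _ hy
  rw [mul_div_cancel_left₀ _ (by positivity)] at hratio
  have hm : 0 < heavyTailTerm q n (√n * √(L n)) :=
    heavyTailTerm_pos (by linarith) ((lt_sqrt_of_sq_lt (by linarith)).trans_le hy)
  exact mul_le_and_le_mul_of_abs_div_sub_one_le
    (add_pos_of_pos_of_nonneg hm (one_sub_stdNormalCDF_nonneg _)) hratio

lemma tendsto_sumTail_sqrt_mul_sqrt_zero (hq : 2 < q) (hNagaev : NagaevApprox μ X q ε)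
    {L : ℕ → ℝ} (hL : Tendsto L atTop atTop) :
    Tendsto (fun n ↦ sumTail μ X n (√n * √(L n))) atTop (𝓝 0) := by
  have hL1 := hL.eventually_ge_atTop 1
  have hmain : Tendsto (fun n : ℕ ↦ (1 + ε) *
      (heavyTailTerm q n (√n * √(L n)) + (1 - stdNormalCDF √(L n)))) atTop (𝓝 0) := by
    simpa using ((tendsto_heavyTailTerm_sqrt_mul_sqrt_zero hq hL1).add
      (tendsto_one_sub_stdNormalCDF_atTop.comp (tendsto_sqrt_atTop.comp hL))).const_mul (1 + ε)
  exact tendsto_of_tendsto_of_tendsto_of_le_of_le' tendsto_const_nhds hmain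
    (.of_forall fun n ↦ ENNReal.toReal_nonneg)
    ((eventually_sumTail_mem_Icc hNagaev hL1).mono fun n hn ↦ hn.2)

lemma tendsto_mul_sumTail_sqrt_mul_sqrt_two_mul_log_atTop (hq : 2 < q) (hε : ε < 1)
    (hNagaev : NagaevApprox μ X q ε)
    {p : ℕ → ℕ} (hptop : Tendsto (fun n ↦ (p n : ℝ)) atTop atTop)
    (hrate : Tendsto
      (fun n : ℕ ↦ (n : ℝ) ^ (q / 2 - 1) * log n ^ 2 * log (p n) ^ (q / 2) / p n)
      atTop (𝓝 0)) :
    Tendsto (fun n ↦ p n * sumTail μ X n (√n * √(2 * log (p n)))) atTop atTop := by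
  have hL1 : ∀ᶠ n in atTop, 1 ≤ 2 * log (p n) :=
    ((tendsto_log_atTop.comp hptop).const_mul_atTop two_pos).eventually_ge_atTop 1
  refine tendsto_atTop_mono' _ ?_
    ((tendsto_mul_heavyTailTerm_sqrt_mul_sqrt_atTop hq hptop hrate).const_mul_atTop
      (sub_pos.2 hε))
  filter_upwards [eventually_sumTail_mem_Icc hNagaev hL1] with n hn
  have hT_nonneg := mul_nonneg (sub_pos.2 hε).le (one_sub_stdNormalCDF_nonneg √(2 * log (p n)))
  have hm : (1 - ε) * heavyTailTerm q n (√n * √(2 * log (p n))) ≤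
      sumTail μ X n (√n * √(2 * log (p n))) := by linarith [hn.1]
  calc (1 - ε) * (p n * heavyTailTerm q n (√n * √(2 * log (p n))))
      = p n * ((1 - ε) * heavyTailTerm q n (√n * √(2 * log (p n)))) := by ring
    _ ≤ p n * sumTail μ X n (√n * √(2 * log (p n))) := by gcongr

end NagaevApprox

theorem stmt_12_general {Ω : Type*} [MeasurableSpace Ω] (μ : Measure Ω)
    (q : ℝ) (hq : 2 < q) (X : ℕ → Ω → ℝ) (p : ℕ → ℕ)
    (hptop : Tendsto (fun n => (p n : ℝ)) atTop atTop)
    (hNagaev : ∀ ε : ℝ, 0 < ε → ∃ N : ℕ, ∀ n ≥ N, ∀ y : ℝ, Real.sqrt n ≤ y →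
      |sumTail μ X n y /
          ((n : ℝ) * y ^ (-q) * (Real.log y) ^ (-(2 : ℝ)) +
            (1 - stdNormalCDF (y / Real.sqrt n))) - 1| ≤ ε)
    (hrate : Tendsto
      (fun n : ℕ => (n : ℝ) ^ (q / 2 - 1) * (Real.log n) ^ 2 * (Real.log (p n)) ^ (q / 2) / p n)
      atTop (nhds 0)) :
    Tendsto (fun n => (p n : ℝ) *
        (2 * (1 - stdNormalCDF (Real.sqrt (2 * Real.log (p n)))))) atTop (nhds 0) ∧
    Tendsto (fun n => (p n : ℝ) *
        sumTail μ X n (Real.sqrt n * Real.sqrt (2 * Real.log (p n)))) atTop atTop ∧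
    Tendsto (fun n =>
        |(1 - 2 * sumTail μ X n (Real.sqrt n * Real.sqrt (2 * Real.log (p n)))) ^ (p n) -
          (2 * stdNormalCDF (Real.sqrt (2 * Real.log (p n))) - 1) ^ (p n)|)
      atTop (nhds 1) := by
  have hL : Tendsto (fun n ↦ 2 * log (p n)) atTop atTop :=
    (tendsto_log_atTop.comp hptop).const_mul_atTop two_pos
  have hS := tendsto_sumTail_sqrt_mul_sqrt_zero hq (hNagaev (1 / 2) one_half_pos) hL
  have hpS := tendsto_mul_sumTail_sqrt_mul_sqrt_two_mul_log_atTop hq (by norm_num)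
    (hNagaev (1 / 2) one_half_pos) hptop hrate
  have hpT : Tendsto (fun n ↦ p n * (2 * (1 - stdNormalCDF √(2 * log (p n))))) atTop
      (𝓝 0) := by
    simpa [mul_left_comm] using
      (tendsto_mul_one_sub_stdNormalCDF_sqrt_two_mul_log hptop).const_mul 2
  refine ⟨hpT, hpS, ?_⟩
  have hsample := tendsto_one_sub_pow_of_tendsto_mul_atTop (k := p)
    (by simpa only [mul_zero] using hS.const_mul 2)
    (by simpa [mul_left_comm] using hpS.const_mul_atTop two_pos)
  have hgauss := tendsto_one_sub_pow_of_tendsto_mul_zero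
    (fun n ↦ ⟨by linarith [one_sub_stdNormalCDF_nonneg √(2 * log (p n))],
      by linarith [one_sub_stdNormalCDF_le_one √(2 * log (p n))]⟩) hpT
  have hdiff := (hsample.sub hgauss).abs
  rw [zero_sub, abs_neg, abs_one] at hdiff
  exact hdiff.congr fun n ↦ by ring_nf

/-- Failure of Gaussian approximation when `p` grows too fast: for i.i.d. symmetric `X_i`
with unit variance and regularly varying tail `P(X ≥ u) = u^{-q}(log u)^{-2}`, under the
Nagaev expansion and `n^{q/2-1} = o(p (log n)^{-2} (log p)^{-q/2})`, with
`u = √(2 log p)`: `p P(|N(0,1)| ≥ u) → 0`, `p P(M_n ≥ √n u) → ∞`, and hence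
`|P^p(|M_n| ≤ √n u) − P^p(|N(0,1)| ≤ u)| → 1`. -/
theorem stmt_12 {Ω : Type*} [MeasurableSpace Ω] (μ : Measure Ω) [IsProbabilityMeasure μ]
    (q : ℝ) (hq : 2 < q) (X : ℕ → Ω → ℝ) (p : ℕ → ℕ)
    (hmeas : ∀ i, Measurable (X i))
    (hindep : iIndepFun X μ)
    (hident : ∀ i, IdentDistrib (X i) (X 0) μ μ)
    (hsymm : Measure.map (X 0) μ = Measure.map (fun ω => -X 0 ω) μ)
    (hvar : ∫ ω, X 0 ω ^ 2 ∂μ = 1)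
    (htail : ∃ u₀ : ℝ, 1 < u₀ ∧ ∀ u : ℝ, u₀ ≤ u →
      (μ {ω | u ≤ X 0 ω}).toReal = u ^ (-q) * (Real.log u) ^ (-(2 : ℝ)))
    (hp2 : ∀ n, 2 ≤ p n)
    (hptop : Tendsto (fun n => (p n : ℝ)) atTop atTop)
    (hNagaev : ∀ ε : ℝ, 0 < ε → ∃ N : ℕ, ∀ n ≥ N, ∀ y : ℝ, Real.sqrt n ≤ y →
      |sumTail μ X n y /
          ((n : ℝ) * y ^ (-q) * (Real.log y) ^ (-(2 : ℝ)) +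
            (1 - stdNormalCDF (y / Real.sqrt n))) - 1| ≤ ε)
    (hrate : Tendsto
      (fun n : ℕ => (n : ℝ) ^ (q / 2 - 1) * (Real.log n) ^ 2 * (Real.log (p n)) ^ (q / 2) / p n)
      atTop (nhds 0)) :
    Tendsto (fun n => (p n : ℝ) *
        (2 * (1 - stdNormalCDF (Real.sqrt (2 * Real.log (p n)))))) atTop (nhds 0) ∧
    Tendsto (fun n => (p n : ℝ) *
        sumTail μ X n (Real.sqrt n * Real.sqrt (2 * Real.log (p n)))) atTop atTop ∧
    Tendsto (fun n =>
        |(1 - 2 * sumTail μ X n (Real.sqrt n * Real.sqrt (2 * Real.log (p n)))) ^ (p n) -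
          (2 * stdNormalCDF (Real.sqrt (2 * Real.log (p n))) - 1) ^ (p n)|)
      atTop (nhds 1) :=
  stmt_12_general μ q hq X p hptop hNagaev hrate
end

section
/- Under the bound |γ_{jk}(l)| ≤ ∑_{h=0}^∞ δ_{h,2,j} δ_{h+l,2,k}, the tail sum of cross-autocovariances satisfies |∑_{|l|>M} γ_{jk}(l)| ≤ 2 Δ_{0,2,j} Δ_{M+1,2,k}, where Δ_{m,2,j} = ∑_{i=m}^∞ δ_{i,2,j}. -/
/-! The substitution `(m, h) ↦ (h, h + m)` embeds the index set of `∑_m ∑_h δ_j(h) δ_k(h + m)`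
injectively into `ℕ × ℕ`, so for nonnegative summands this double sum is at most
`(∑_h δ_j(h)) (∑_i δ_k(i))`. Applied to `δ_k(M + 1 + ·)`, this bounds the majorant of
`|γ_{jk}(l)|` summed over `l > M` by `Δ_{0,2,j} Δ_{M+1,2,k}`; the lags `l < -M` contribute the
same bound once more. -/

theorem abs_tsum_int_le_two_mul_tsum {f : ℤ → ℝ} {g : ℕ → ℝ} (hg : Summable g)
    (hfg : ∀ l, |f l| ≤ g l.natAbs) : |∑' l, f l| ≤ 2 * ∑' n, g n := by
  have hg_succ : Summable fun n => g (n + 1) := (summable_nat_add_iff 1).mpr hg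
  have hsum : HasSum (fun l : ℤ => g l.natAbs) (∑' n, g n + ∑' n, g (n + 1)) :=
    .of_nat_of_neg_add_one hg.hasSum (by convert hg_succ.hasSum using 3; omega)
  have hg0 : 0 ≤ g 0 := (abs_nonneg _).trans (hfg 0)
  calc |∑' l, f l| ≤ ∑' n, g n + ∑' n, g (n + 1) :=
        tsum_of_norm_bounded (f := f) hsum hfg
    _ ≤ 2 * ∑' n, g n := by rw [hg.tsum_eq_zero_add]; linarith

theorem injective_snd_snd_add_fst : Function.Injective fun p : ℕ × ℕ => (p.2, p.2 + p.1) := by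
  intro p q h
  simp only [Prod.mk.injEq] at h
  ext <;> omega

section ShiftedProduct

variable {a b : ℕ → ℝ} (ha : 0 ≤ a) (hb : 0 ≤ b) (sa : Summable a) (sb : Summable b)
include ha hb sa sb

theorem summable_mul_shift : Summable fun p : ℕ × ℕ => a p.2 * b (p.2 + p.1) :=
  (sa.mul_of_nonneg sb ha hb).comp_injective injective_snd_snd_add_fst

theorem summable_tsum_mul_shift : Summable fun m => ∑' h, a h * b (h + m) :=
  (summable_mul_shift ha hb sa sb).prod

theorem tsum_tsum_mul_shift_le : ∑' m, ∑' h, a h * b (h + m) ≤ (∑' h, a h) * ∑' i, b i := by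
  rw [← (summable_mul_shift ha hb sa sb).tsum_prod,
    tsum_mul_tsum_of_summable_norm (by simpa [abs_of_nonneg (ha _)] using sa)
      (by simpa [abs_of_nonneg (hb _)] using sb)]
  exact tsum_comp_le_tsum_of_inj (sa.mul_of_nonneg sb ha hb)
    (fun p => mul_nonneg (ha _) (hb _)) injective_snd_snd_add_fst

end ShiftedProduct

section Tail

variable {a b : ℕ → ℝ} (N : ℕ)

theorem ite_tsum_mul_shift_add (n : ℕ) :
    (if N < n + (N + 1) then ∑' h, a h * b (h + (n + (N + 1))) else 0) =
      ∑' h, a h * b (N + 1 + (h + n)) := by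
  rw [if_pos (by omega)]
  exact tsum_congr fun h => by rw [show h + (n + (N + 1)) = N + 1 + (h + n) by omega]

variable (ha : 0 ≤ a) (hb : 0 ≤ b) (sa : Summable a) (sb : Summable b)
include ha hb sa sb

theorem summable_ite_tsum_mul_shift :
    Summable fun n => if N < n then ∑' h, a h * b (h + n) else 0 := by
  rw [← summable_nat_add_iff (N + 1)]
  simpa only [ite_tsum_mul_shift_add] using
    summable_tsum_mul_shift (b := fun i => b (N + 1 + i)) ha (fun i => hb (N + 1 + i)) sa
      (sb.comp_injective (add_right_injective (N + 1)))

theorem tsum_ite_tsum_mul_shift_le :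
    ∑' n, (if N < n then ∑' h, a h * b (h + n) else 0) ≤
      (∑' h, a h) * ∑' i, b (N + 1 + i) := by
  rw [← (summable_ite_tsum_mul_shift N ha hb sa sb).sum_add_tsum_nat_add (N + 1),
    Finset.sum_eq_zero fun n hn => if_neg (by simpa using hn), zero_add]
  simpa only [ite_tsum_mul_shift_add] using
    tsum_tsum_mul_shift_le (b := fun i => b (N + 1 + i)) ha (fun i => hb (N + 1 + i)) sa
      (sb.comp_injective (add_right_injective (N + 1)))

end Tail

/-- Tail sum of cross-autocovariances: if `|γ_{jk}(l)| ≤ ∑_{h≥0} δ_j(h) δ_k(h+|l|)`, then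
`|∑_{|l|>M} γ_{jk}(l)| ≤ 2 Δ_{0,2,j} Δ_{M+1,2,k}`, where `Δ_{m,2,j} = ∑_{i≥m} δ_j(i)`. -/
theorem stmt_15 (γ : ℤ → ℝ) (δj δk : ℕ → ℝ) (M : ℕ)
    (hδj : ∀ h, 0 ≤ δj h) (hδk : ∀ h, 0 ≤ δk h)
    (hsumj : Summable δj) (hsumk : Summable δk)
    (hbound : ∀ l : ℤ, M < l.natAbs → |γ l| ≤ ∑' h : ℕ, δj h * δk (h + l.natAbs)) :
    |∑' l : ℤ, (if M < l.natAbs then γ l else 0)| ≤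
      2 * (∑' i : ℕ, δj i) * ∑' i : ℕ, δk (M + 1 + i) := by
  have hmajorant : ∀ l : ℤ, |if M < l.natAbs then γ l else 0| ≤
      if M < l.natAbs then ∑' h, δj h * δk (h + l.natAbs) else 0 := by
    intro l
    split_ifs with hl
    · exact hbound l hl
    · simp
  calc _ ≤ 2 * ∑' n, (if M < n then ∑' h, δj h * δk (h + n) else 0) :=
        abs_tsum_int_le_two_mul_tsum
          (summable_ite_tsum_mul_shift M hδj hδk hsumj hsumk) hmajorant
    _ ≤ 2 * ((∑' i, δj i) * ∑' i, δk (M + 1 + i)) := by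
        gcongr
        exact tsum_ite_tsum_mul_shift_le M hδj hδk hsumj hsumk
    _ = _ := by ring
end
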